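/- For every α > 0, every sequence x : ℕ₊ → ℂ, and every n ≥ 1, the tridiagonal action of J_α factorises as follows: setting y(m) = m^(α+1/2) x(m), one has (J_α x)(n) = n^(α+1/2)·( c_α(n)·(y(n) − y(n−1)) − c_α(n+1)·(y(n+1) − y(n)) ) for n ≥ 2, and (J_α x)(1) = c_α(1)·y(1) − c_α(2)·(y(2) − y(1)); that is, J_α = D(n^(α+1/2})(I − S*) D(c_α) (I − S) D(n^(α+1/2)) where S is the unilateral right shift and D(γ) denotes the diagonal operator with entries γ(n). -/

import Mathlib

/-- Off-diagonal Jacobi parameter `a_α(x) = x^(α+1/2) (x+1)^(α+1/2) / (x^(2α) - (x+1)^(2α))`. -/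
noncomputable def aJ (α x : ℝ) : ℝ :=
  (x ^ (α + 1/2) * (x + 1) ^ (α + 1/2)) / (x ^ (2 * α) - (x + 1) ^ (2 * α))

/-- Diagonal Jacobi parameter
`b_α(x) = x^(2α+1)((x+1)^(2α) - (x-1)^(2α)) / (((x+1)^(2α) - x^(2α))(x^(2α) - (x-1)^(2α)))`. -/
noncomputable def bJ (α x : ℝ) : ℝ :=
  (x ^ (2 * α + 1) * ((x + 1) ^ (2 * α) - (x - 1) ^ (2 * α))) /
    (((x + 1) ^ (2 * α) - x ^ (2 * α)) * (x ^ (2 * α) - (x - 1) ^ (2 * α)))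

/-- `c_α(x) = 1/(x^(2α) - (x-1)^(2α))`. -/
noncomputable def cJ (α x : ℝ) : ℝ := 1 / (x ^ (2 * α) - (x - 1) ^ (2 * α))


/-! With `w(t) = t^(α+1/2)`, the factorised operator has diagonal entries `w(n)² (c(n) + c(n+1))`
and off-diagonal entries `-w(n) w(n+1) c(n+1)`. These are `b_α(n)` and `a_α(n)`: the denominators
of `a_α, b_α` are differences of consecutive values of `t^(2α)`, nonzero because `t ↦ t^(2α)` is
injective on `[0, ∞)`. The first row is the general row at `t = 1` with the entry at `0` set to `0`. -/

lemma aJ_eq_neg_mul_cJ (α t : ℝ) :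
    aJ α t = -(t ^ (α + 1/2) * (t + 1) ^ (α + 1/2)) * cJ α (t + 1) := by
  rw [aJ, cJ, add_sub_cancel_right, div_eq_mul_inv, one_div,
    ← neg_sub ((t + 1) ^ (2 * α)), inv_neg]
  ring

lemma rpow_sub_rpow_sub_one_ne_zero {p t : ℝ} (hp : p ≠ 0) (ht : 1 ≤ t) :
    t ^ p - (t - 1) ^ p ≠ 0 := by
  intro h
  have := Real.rpow_left_injOn hp (show 0 ≤ t by linarith) (show 0 ≤ t - 1 by linarith)
    (sub_eq_zero.mp h)
  linarith

lemma bJ_eq_mul_cJ_add_cJ {α : ℝ} (hα : α ≠ 0) {t : ℝ} (ht : 1 ≤ t) :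
    bJ α t = t ^ (2 * α + 1) * (cJ α t + cJ α (t + 1)) := by
  have h2α : 2 * α ≠ 0 := mul_ne_zero two_ne_zero hα
  have hd := rpow_sub_rpow_sub_one_ne_zero h2α ht
  have hd' := rpow_sub_rpow_sub_one_ne_zero h2α (t := t + 1) (by linarith)
  rw [add_sub_cancel_right] at hd'
  rw [bJ, cJ, cJ, add_sub_cancel_right]
  field_simp
  ring

lemma rpow_two_mul_add_one {α t : ℝ} (ht : 0 ≤ t) :
    t ^ (2 * α + 1) = t ^ (α + 1/2) * t ^ (α + 1/2) := by
  rw [← sq, ← Real.rpow_natCast, ← Real.rpow_mul ht]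
  ring_nf

/-- The row of `J_α` at a real point `t ≥ 1`, with `u, v, w` the entries at `t - 1, t, t + 1`. -/
theorem jacobi_row_eq {α : ℝ} (hα : α ≠ 0) {t : ℝ} (ht : 1 ≤ t) (u v w : ℂ) :
    (aJ α (t - 1) : ℂ) * u + (bJ α t : ℂ) * v + (aJ α t : ℂ) * w
      = ((t ^ (α + 1/2) : ℝ) : ℂ) *
          ((cJ α t : ℂ) * ((t ^ (α + 1/2) : ℝ) * v - ((t - 1) ^ (α + 1/2) : ℝ) * u)
            - (cJ α (t + 1) : ℂ) * (((t + 1) ^ (α + 1/2) : ℝ) * w - (t ^ (α + 1/2) : ℝ) * v)) := by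
  rw [aJ_eq_neg_mul_cJ, sub_add_cancel, aJ_eq_neg_mul_cJ, bJ_eq_mul_cJ_add_cJ hα ht,
    rpow_two_mul_add_one (by linarith)]
  push_cast
  ring

lemma PNat.cast_sub_one {n : ℕ+} (hn : 1 < n) : ((n - 1 : ℕ+) : ℝ) = n - 1 := by
  rw [PNat.sub_coe, if_pos hn, PNat.one_coe, Nat.cast_sub n.pos, Nat.cast_one]

/-- Factorisation of the tridiagonal action of `J_α`:
with `y(m) = m^(α+1/2) x(m)`, one has, for `n ≥ 2`,
`(J_α x)(n) = n^(α+1/2) (c_α(n)(y(n)-y(n-1)) - c_α(n+1)(y(n+1)-y(n)))`,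
and `(J_α x)(1) = c_α(1) y(1) - c_α(2)(y(2)-y(1))`; that is,
`J_α = D(n^(α+1/2))(I-S*) D(c_α) (I-S) D(n^(α+1/2))`. -/
theorem jacobi_factorisation (α : ℝ) (hα : 0 < α) (x y : ℕ+ → ℂ)
    (hy : ∀ m : ℕ+, y m = (((m : ℝ) ^ (α + 1/2) : ℝ) : ℂ) * x m) :
    (∀ n : ℕ+, 2 ≤ n →
      (aJ α ((n : ℝ) - 1) : ℂ) * x (n - 1) + (bJ α (n : ℝ) : ℂ) * x n
          + (aJ α (n : ℝ) : ℂ) * x (n + 1)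
        = (((n : ℝ) ^ (α + 1/2) : ℝ) : ℂ) *
            ((cJ α (n : ℝ) : ℂ) * (y n - y (n - 1))
              - (cJ α ((n : ℝ) + 1) : ℂ) * (y (n + 1) - y n))) ∧
    (bJ α 1 : ℂ) * x 1 + (aJ α 1 : ℂ) * x 2
      = (cJ α 1 : ℂ) * y 1 - (cJ α 2 : ℂ) * (y 2 - y 1) := by
  refine ⟨fun n hn => ?_, ?_⟩
  · rw [hy, hy, hy, PNat.cast_sub_one hn, PNat.add_coe, PNat.one_coe]
    push_cast
    exact jacobi_row_eq hα.ne' (Nat.one_le_cast.mpr n.pos) _ _ _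
  · have h := jacobi_row_eq hα.ne' le_rfl 0 (x 1) (x 2)
    rw [hy, hy]
    simpa [one_add_one_eq_two] using h
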